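/- Let L(x) = i[H,x] + Σ_{i=1}^m (V_i* x V_i − ½(V_i*V_i x + x V_i*V_i)) and L'(x) = i[H',x] + Σ_{i=1}^{m'} (W_i* x W_i − ½(W_i*W_i x + x W_i*W_i)) be Lindblad generators in standard form with m ≤ m', and assume span{V₁,…,V_m} = span{W₁,…,W_m}. Let L̂'(x) = i[H',x] + Σ_{i=1}^m (W_i* x W_i − ½(W_i*W_i x + x W_i*W_i)) be the truncation of L'. Then for any C > 0 and C₁ ≥ 0: Γ_L ≤_cp C Γ_{L̂'} + C₁ Γ_{L'−L̂'} holds if and only if Γ_L ≤_cp C Γ_{L̂'}. -/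

import Mathlib

open Matrix
open scoped ComplexOrder Kronecker

/-- `n × n` complex matrices. -/
abbrev Mat (n : ℕ) := Matrix (Fin n) (Fin n) ℂ

/-- The gradient form (carré du champ) of a map `L`:
`Γ_L(x,y) = L(x*y) − L(x*)y − x*L(y)`. -/
noncomputable def gradForm {n : ℕ} (L : Mat n → Mat n) (x y : Mat n) : Mat n :=
  L (xᴴ * y) - L xᴴ * y - xᴴ * L y

/-- The amplification `id_{M_m} ⊗ L` acting on `M_m(Mₙ(ℂ))`,
realized on matrices indexed by `Fin m × Fin n`. -/
noncomputable def amp {n : ℕ} (m : ℕ) (L : Mat n → Mat n)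
    (X : Matrix (Fin m × Fin n) (Fin m × Fin n) ℂ) :
    Matrix (Fin m × Fin n) (Fin m × Fin n) ℂ :=
  Matrix.of fun p q => L (Matrix.of fun a b => X (p.1, a) (q.1, b)) p.2 q.2

/-- The amplified gradient form `Γ_{id_{M_m} ⊗ L}`. -/
noncomputable def gradFormAmp {n : ℕ} (m : ℕ) (L : Mat n → Mat n)
    (X Y : Matrix (Fin m × Fin n) (Fin m × Fin n) ℂ) :
    Matrix (Fin m × Fin n) (Fin m × Fin n) ℂ :=
  amp m L (Xᴴ * Y) - amp m L Xᴴ * Y - Xᴴ * amp m L Y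

/-- Complete positivity of the gradient form of `L`. -/
def GradCP {n : ℕ} (L : Mat n → Mat n) : Prop :=
  ∀ (m : ℕ) (X : Matrix (Fin m × Fin n) (Fin m × Fin n) ℂ),
    (gradFormAmp m L X X).PosSemidef

/-- The Lindblad generator with Hamiltonian `H` and jump operators `V`:
`L(x) = i[H,x] + Σ_j (V_j* x V_j − ½(V_j*V_j x + x V_j*V_j))`. -/
noncomputable def lindbladOf {n : ℕ} (H : Mat n) {m : ℕ} (V : Fin m → Mat n) :
    Mat n → Mat n :=
  fun x => Complex.I • (H * x - x * H) +
    ∑ i, ((V i)ᴴ * x * V i -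
      (2⁻¹ : ℂ) • ((V i)ᴴ * V i * x + x * ((V i)ᴴ * V i)))

/-- `L` is a Lindblad generator. -/
def IsLindblad {n : ℕ} (L : Mat n → Mat n) : Prop :=
  ∃ (H : Mat n) (m : ℕ) (V : Fin m → Mat n), H.IsHermitian ∧ L = lindbladOf H V

/-- The Hilbert–Schmidt norm of a matrix. -/
noncomputable def hsNorm {n : ℕ} (x : Mat n) : ℝ :=
  Real.sqrt (Matrix.trace (xᴴ * x)).re

/-- The `2 → 2` operator norm of a map on matrices, with respect to the
Hilbert–Schmidt norm. -/
noncomputable def norm22 {n : ℕ} (L : Mat n → Mat n) : ℝ :=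
  sSup {r : ℝ | ∃ x : Mat n, hsNorm x ≤ 1 ∧ r = hsNorm (L x)}

/-- `σ`-detailed balance: `Tr(σ L(x)* y) = Tr(σ x* L(y))` for all `x, y`. -/
def DetailedBalance {n : ℕ} (σ : Mat n) (L : Mat n → Mat n) : Prop :=
  ∀ x y : Mat n, Matrix.trace (σ * (L x)ᴴ * y) = Matrix.trace (σ * xᴴ * L y)

/-- The jump operators `V` are traceless and orthonormal with respect to the
normalized trace `τ = Tr/n` (standard form). -/
def StdJump {n m : ℕ} (V : Fin m → Mat n) : Prop :=
  (∀ j, Matrix.trace (V j) = 0) ∧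
  ∀ i j, Matrix.trace ((V i)ᴴ * V j) = if i = j then (n : ℂ) else 0

/-- The jump map `Ψ(x) = Σ_j V_j* x V_j`. -/
noncomputable def jumpMap {n m : ℕ} (V : Fin m → Mat n) : Mat n → Mat n :=
  fun x => ∑ j, (V j)ᴴ * x * V j

/-- Complete positivity of a map on `Mₙ(ℂ)`. -/
def IsCPMap {n : ℕ} (Φ : Mat n → Mat n) : Prop :=
  ∀ (m : ℕ) (X : Matrix (Fin m × Fin n) (Fin m × Fin n) ℂ),
    X.PosSemidef → (amp m Φ X).PosSemidef

/-- The Lindblad generator `−(I − E_τ)`, where `E_τ(x) = τ(x)·Iₙ`. -/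
noncomputable def etauGen (n : ℕ) : Mat n → Mat n :=
  fun x => (Matrix.trace x / n) • 1 - x

/-- The gradient matrix `m_L = (Γ_L(e_{rs}, e_{tv}))` of `L`. -/
noncomputable def gradMatrix {n : ℕ} (L : Mat n → Mat n) :
    Matrix ((Fin n × Fin n) × Fin n) ((Fin n × Fin n) × Fin n) ℂ :=
  Matrix.of fun p q =>
    gradForm L (Matrix.single p.1.1 p.1.2 1)
      (Matrix.single q.1.1 q.1.2 1) p.2 q.2

/-- `E` is the trace-preserving conditional expectation onto (the subalgebra) `N`,
i.e. the orthogonal projection onto `N` for the trace inner product. -/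
def IsCondExpTau {n : ℕ} (N : Set (Mat n)) (E : Mat n → Mat n) : Prop :=
  IsLinearMap ℂ E ∧ (∀ x, E x ∈ N) ∧ (∀ x ∈ N, E x = x) ∧
  ∀ x : Mat n, ∀ y ∈ N, Matrix.trace ((x - E x)ᴴ * y) = 0

/-- `E` is the `σ`-preserving (GNS) conditional expectation onto `N`,
i.e. the orthogonal projection onto `N` for the GNS inner product
`⟨x,y⟩ = Tr(σ x* y)`. -/
def IsCondExpGNS {n : ℕ} (σ : Mat n) (N : Set (Mat n)) (E : Mat n → Mat n) : Prop :=
  IsLinearMap ℂ E ∧ (∀ x, E x ∈ N) ∧ (∀ x ∈ N, E x = x) ∧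
  ∀ x : Mat n, ∀ y ∈ N, Matrix.trace (σ * (x - E x)ᴴ * y) = 0

noncomputable def oneKron (N : ℕ) {n : ℕ} (A : Mat n) :
    Matrix (Fin N × Fin n) (Fin N × Fin n) ℂ :=
  Matrix.of fun p q => if p.1 = q.1 then A p.2 q.2 else 0

/-- generalized Lindblad map over an arbitrary index type -/
noncomputable def glind {ι : Type*} [Fintype ι] [DecidableEq ι]
    (H : Matrix ι ι ℂ) {m : ℕ} (V : Fin m → Matrix ι ι ℂ) :
    Matrix ι ι ℂ → Matrix ι ι ℂ :=
  fun x => Complex.I • (H * x - x * H) +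
    ∑ i, ((V i)ᴴ * x * V i -
      (2⁻¹ : ℂ) • ((V i)ᴴ * V i * x + x * ((V i)ᴴ * V i)))

noncomputable def ggrad {ι : Type*} [Fintype ι] [DecidableEq ι]
    (L : Matrix ι ι ℂ → Matrix ι ι ℂ) (x y : Matrix ι ι ℂ) : Matrix ι ι ℂ :=
  L (xᴴ * y) - L xᴴ * y - xᴴ * L y

lemma ggrad_glind {ι : Type*} [Fintype ι] [DecidableEq ι]
    (H : Matrix ι ι ℂ) {m : ℕ} (V : Fin m → Matrix ι ι ℂ) (x y : Matrix ι ι ℂ) :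
    ggrad (glind H V) x y =
      ∑ i, (x * V i - V i * x)ᴴ * (y * V i - V i * y) := by
  simp only [ggrad, glind, conjTranspose_sub, conjTranspose_mul, conjTranspose_smul,
    smul_sub, smul_add, sub_mul, add_mul, mul_sub, mul_add,
    Finset.sum_mul, Finset.mul_sum, smul_mul_assoc, mul_smul_comm, mul_assoc]
  have per : (∑ i, ((V i)ᴴ * (xᴴ * (y * V i)) - xᴴ * ((V i)ᴴ * (y * V i)) -
        ((V i)ᴴ * (xᴴ * (V i * y)) - xᴴ * ((V i)ᴴ * (V i * y))))) =
      (∑ i, ((V i)ᴴ * (xᴴ * (y * V i)) -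
              ((2⁻¹ : ℂ) • ((V i)ᴴ * (V i * (xᴴ * y))) + (2⁻¹ : ℂ) • (xᴴ * (y * ((V i)ᴴ * V i))))))
    - (∑ i, ((V i)ᴴ * (xᴴ * (V i * y)) -
              ((2⁻¹ : ℂ) • ((V i)ᴴ * (V i * (xᴴ * y))) + (2⁻¹ : ℂ) • (xᴴ * ((V i)ᴴ * (V i * y))))))
    - (∑ i, (xᴴ * ((V i)ᴴ * (y * V i)) -
            ((2⁻¹ : ℂ) • (xᴴ * ((V i)ᴴ * (V i * y))) + (2⁻¹ : ℂ) • (xᴴ * (y * ((V i)ᴴ * V i)))))) := by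
    rw [← Finset.sum_sub_distrib, ← Finset.sum_sub_distrib]
    refine Finset.sum_congr rfl fun i _ => ?_
    module
  rw [show (∑ i, ((V i)ᴴ * (xᴴ * (y * V i)) - xᴴ * ((V i)ᴴ * (y * V i)) -
        ((V i)ᴴ * (xᴴ * (V i * y)) - xᴴ * ((V i)ᴴ * (V i * y))))) = _ from per]
  abel

lemma oneKron_conjTranspose (N : ℕ) {n : ℕ} (A : Mat n) :
    (oneKron N A)ᴴ = oneKron N Aᴴ := by
  ext p q
  simp only [oneKron, conjTranspose_apply, of_apply, eq_comm (a := q.1)]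
  split <;> simp

lemma mul_oneKron {N n : ℕ} (A : Mat n)
    (X : Matrix (Fin N × Fin n) (Fin N × Fin n) ℂ) (p q : Fin N × Fin n) :
    (X * oneKron N A) p q = ∑ s, X p (q.1, s) * A s q.2 := by
  rw [mul_apply, Fintype.sum_prod_type]
  simp only [oneKron, of_apply]
  rw [Finset.sum_comm]
  simp [Finset.sum_ite_eq, mul_ite]

lemma oneKron_mul {N n : ℕ} (A : Mat n)
    (X : Matrix (Fin N × Fin n) (Fin N × Fin n) ℂ) (p q : Fin N × Fin n) :
    (oneKron N A * X) p q = ∑ s, A p.2 s * X (p.1, s) q := by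
  rw [mul_apply, Fintype.sum_prod_type]
  simp only [oneKron, of_apply]
  simp [Finset.sum_ite_eq, ite_mul]

lemma oneKron_mul_oneKron {N n : ℕ} (A B : Mat n) :
    oneKron N A * oneKron N B = oneKron N (A * B) := by
  ext p q
  rw [mul_oneKron]
  simp only [oneKron, of_apply, mul_apply]
  split <;> simp

lemma blk_E1 {N n : ℕ} (A : Mat n) (X : Matrix (Fin N × Fin n) (Fin N × Fin n) ℂ)
    (p q : Fin N × Fin n) :
    (A * Matrix.of (fun a b => X (p.1, a) (q.1, b))) p.2 q.2 = (oneKron N A * X) p q := by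
  rw [oneKron_mul]; simp [mul_apply]

lemma blk_E2 {N n : ℕ} (B : Mat n) (X : Matrix (Fin N × Fin n) (Fin N × Fin n) ℂ)
    (p q : Fin N × Fin n) :
    (Matrix.of (fun a b => X (p.1, a) (q.1, b)) * B) p.2 q.2 = (X * oneKron N B) p q := by
  rw [mul_oneKron]; simp [mul_apply]

lemma blk_E3 {N n : ℕ} (A B : Mat n) (X : Matrix (Fin N × Fin n) (Fin N × Fin n) ℂ)
    (p q : Fin N × Fin n) :
    (A * Matrix.of (fun a b => X (p.1, a) (q.1, b)) * B) p.2 q.2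
      = (oneKron N A * X * oneKron N B) p q := by
  rw [mul_oneKron]
  simp only [oneKron_mul]
  simp [mul_apply]

lemma amp_lindblad {n : ℕ} (N : ℕ) (H : Mat n) {m : ℕ} (V : Fin m → Mat n)
    (X : Matrix (Fin N × Fin n) (Fin N × Fin n) ℂ) :
    amp N (lindbladOf H V) X = glind (oneKron N H) (fun i => oneKron N (V i)) X := by
  ext p q
  simp only [amp, of_apply, lindbladOf, glind, Matrix.add_apply, Matrix.sub_apply, Matrix.smul_apply,
    Matrix.sum_apply, smul_eq_mul, oneKron_conjTranspose, oneKron_mul_oneKron,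
    blk_E1, blk_E2, blk_E3]

lemma gradFormAmp_lindblad {n : ℕ} (N : ℕ) (H : Mat n) {m : ℕ} (V : Fin m → Mat n)
    (X Y : Matrix (Fin N × Fin n) (Fin N × Fin n) ℂ) :
    gradFormAmp N (lindbladOf H V) X Y =
      ∑ i, (X * oneKron N (V i) - oneKron N (V i) * X)ᴴ *
        (Y * oneKron N (V i) - oneKron N (V i) * Y) := by
  have h : gradFormAmp N (lindbladOf H V) X Y
      = ggrad (glind (oneKron N H) (fun i => oneKron N (V i))) X Y := by
    unfold gradFormAmp ggrad
    rw [amp_lindblad, amp_lindblad, amp_lindblad]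
  rw [h, ggrad_glind]

lemma sum_mulVec' {ι α : Type*} [Fintype α] (s : Finset ι)
    (f : ι → Matrix α α ℂ) (v : α → ℂ) :
    (∑ i ∈ s, f i) *ᵥ v = ∑ i ∈ s, f i *ᵥ v := by
  ext j
  simp [mulVec, dotProduct, Matrix.sum_apply, Finset.sum_mul, Finset.sum_apply]
  rw [Finset.sum_comm]

lemma dotProduct_sum' {ι α : Type*} [Fintype α] (s : Finset ι)
    (v : α → ℂ) (w : ι → α → ℂ) :
    v ⬝ᵥ (∑ i ∈ s, w i) = ∑ i ∈ s, v ⬝ᵥ w i := by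
  simp [dotProduct, Finset.mul_sum, Finset.sum_apply]
  rw [Finset.sum_comm]

lemma psd_sum {ι α : Type*} [Fintype α] [DecidableEq α] (s : Finset ι)
    (f : ι → Matrix α α ℂ) (hf : ∀ i ∈ s, (f i).PosSemidef) :
    (∑ i ∈ s, f i).PosSemidef := by
  rw [posSemidef_iff_dotProduct_mulVec]
  constructor
  · show (∑ i ∈ s, f i)ᴴ = _
    rw [conjTranspose_sum]
    exact Finset.sum_congr rfl fun i hi => (hf i hi).1
  · intro x
    rw [sum_mulVec', dotProduct_sum']
    exact Finset.sum_nonneg fun i hi => (hf i hi).dotProduct_mulVec_nonneg x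

lemma psd_smul_real {α : Type*} [Fintype α] [DecidableEq α] {A : Matrix α α ℂ}
    (r : ℝ) (hr : 0 ≤ r) (hA : A.PosSemidef) : (((r : ℂ)) • A).PosSemidef := by
  rw [posSemidef_iff_dotProduct_mulVec]
  constructor
  · show ((r : ℂ) • A)ᴴ = _
    rw [conjTranspose_smul, Complex.star_def, Complex.conj_ofReal, hA.1]
  · intro x
    rw [smul_mulVec, dotProduct_smul, smul_eq_mul]
    exact mul_nonneg (by exact_mod_cast Complex.zero_le_real.mpr hr) (hA.dotProduct_mulVec_nonneg x)

lemma key_psd {n m' : ℕ} (hn : 0 < n) (W : Fin m' → Mat n)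
    (htr : ∀ j, Matrix.trace (W j) = 0)
    (horth : ∀ i j, Matrix.trace ((W i)ᴴ * W j) = if i = j then (n : ℂ) else 0)
    (M : Matrix (Fin m') (Fin m') ℂ) (hM : M.IsHermitian)
    (h : ∀ (N : ℕ) (X : Matrix (Fin N × Fin n) (Fin N × Fin n) ℂ),
      (∑ k, ∑ l, M k l • ((X * oneKron N (W k) - oneKron N (W k) * X)ᴴ *
        (X * oneKron N (W l) - oneKron N (W l) * X))).PosSemidef) :
    M.PosSemidef := by
  refine posSemidef_iff_dotProduct_mulVec.mpr ⟨hM, fun c => ?_⟩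
  have hn' : (n : ℂ) ≠ 0 := Nat.cast_ne_zero.mpr hn.ne'
  set B : Mat n := -((n : ℂ)⁻¹ • ∑ l, c l • (W l)ᴴ) with hBdef
  have hWB : ∀ k, Matrix.trace (W k * B) = -(c k) := by
    intro k
    have h1 : ∀ x, Matrix.trace (W k * (W x)ᴴ) = if x = k then (n : ℂ) else 0 := by
      intro x; rw [trace_mul_comm]; exact horth x k
    simp only [hBdef, Matrix.mul_neg, Matrix.mul_smul, Matrix.mul_sum, trace_neg, trace_smul,
      trace_sum, h1, smul_eq_mul, mul_ite, mul_zero, Finset.sum_ite_eq', Finset.mem_univ, if_true]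
    field_simp
  have hTrB : Matrix.trace B = 0 := by
    simp only [hBdef, trace_neg, trace_smul, trace_sum, trace_conjTranspose]
    simp [htr]
  set q : Fin n × Fin n → ℂ := fun p => if p.2 = p.1 then 1 else 0 with hq
  set ξ : Fin n × Fin n → ℂ := fun p => B p.2 p.1 with hxi
  set X : Matrix (Fin n × Fin n) (Fin n × Fin n) ℂ := vecMulVec q (star q) with hX
  have hconjq : ∀ p, (starRingEnd ℂ) (q p) = q p := by
    intro p; by_cases hpp : p.2 = p.1 <;> simp [hq, hpp]
  have hXv : ∀ y : Fin n × Fin n → ℂ, X *ᵥ y = (q ⬝ᵥ y) • q := by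
    intro y; funext p
    simp only [hX, vecMulVec, mulVec, dotProduct, of_apply, Pi.smul_apply, smul_eq_mul,
      Pi.star_apply, RCLike.star_def, hconjq]
    rw [Finset.sum_mul]
    exact Finset.sum_congr rfl fun j _ => by ring
  have hdot : ∀ A : Mat n, q ⬝ᵥ (oneKron n A *ᵥ ξ) = Matrix.trace (A * B) := by
    intro A
    simp only [dotProduct, mulVec, oneKron, of_apply, hq, hxi, Fintype.sum_prod_type,
      ite_mul, one_mul, zero_mul, mul_ite, mul_zero, trace, diag, mul_apply]
    simp [Finset.sum_ite_eq, Finset.sum_ite_eq']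
  have hqxi : q ⬝ᵥ ξ = 0 := by
    have : q ⬝ᵥ ξ = Matrix.trace B := by
      simp only [dotProduct, hq, hxi, Fintype.sum_prod_type, ite_mul, one_mul, zero_mul,
        Finset.sum_ite_eq', Finset.mem_univ, if_true, trace, diag]
    rw [this, hTrB]
  have hqq : q ⬝ᵥ q = (n : ℂ) := by
    simp only [dotProduct, hq, Fintype.sum_prod_type, ite_mul, one_mul, zero_mul,
      Finset.sum_ite_eq', Finset.mem_univ, if_true]
    simp
  have hD : ∀ k, (X * oneKron n (W k) - oneKron n (W k) * X) *ᵥ ξ = (-(c k)) • q := by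
    intro k
    rw [sub_mulVec, ← mulVec_mulVec, ← mulVec_mulVec, hXv, hXv, hqxi, zero_smul,
      mulVec_zero, sub_zero, hdot, hWB]
  have hform := (h n X).dotProduct_mulVec_nonneg ξ
  have hstarxi : star ξ ⬝ᵥ ((∑ k, ∑ l, M k l •
      ((X * oneKron n (W k) - oneKron n (W k) * X)ᴴ *
        (X * oneKron n (W l) - oneKron n (W l) * X))) *ᵥ ξ)
      = (n : ℂ) * (star c ⬝ᵥ (M *ᵥ c)) := by
    rw [sum_mulVec']
    rw [dotProduct_sum']
    have hterm : ∀ k l : Fin m', star ξ ⬝ᵥ ((M k l •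
        ((X * oneKron n (W k) - oneKron n (W k) * X)ᴴ *
          (X * oneKron n (W l) - oneKron n (W l) * X))) *ᵥ ξ)
        = M k l * ((starRingEnd ℂ) (c k) * c l) * n := by
      intro k l
      rw [smul_mulVec, dotProduct_smul, ← mulVec_mulVec, hD, dotProduct_mulVec,
        ← star_mulVec, hD]
      have hsq : star ((-(c k)) • q) = (starRingEnd ℂ) (-(c k)) • q := by
        funext p
        simp only [Pi.star_apply, Pi.smul_apply, smul_eq_mul, star_mul', RCLike.star_def, hconjq]
      rw [hsq, smul_dotProduct, dotProduct_smul, hqq]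
      simp only [smul_eq_mul, map_neg]
      ring
    calc ∑ k, star ξ ⬝ᵥ ((∑ l, M k l •
          ((X * oneKron n (W k) - oneKron n (W k) * X)ᴴ *
            (X * oneKron n (W l) - oneKron n (W l) * X))) *ᵥ ξ)
        = ∑ k, ∑ l, M k l * ((starRingEnd ℂ) (c k) * c l) * n := by
          refine Finset.sum_congr rfl fun k _ => ?_
          rw [sum_mulVec', dotProduct_sum']
          exact Finset.sum_congr rfl fun l _ => hterm k l
      _ = (n : ℂ) * (star c ⬝ᵥ (M *ᵥ c)) := by
          simp only [dotProduct, mulVec, Pi.star_apply, RCLike.star_def, Finset.mul_sum]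
          exact Finset.sum_congr rfl fun k _ => Finset.sum_congr rfl fun l _ => by ring
  rw [hstarxi] at hform
  have hinv : (0:ℂ) ≤ (n : ℂ)⁻¹ := by
    have h2 : ((n:ℝ)⁻¹ : ℂ) = (n : ℂ)⁻¹ := by push_cast; ring
    rw [← h2]
    exact_mod_cast Complex.zero_le_real.mpr (by positivity)
  have h3 := mul_nonneg hinv hform
  rwa [← mul_assoc, inv_mul_cancel₀ hn', one_mul] at h3
lemma amp_comb {n : ℕ} (N : ℕ) (a b : ℂ) (F G K : Mat n → Mat n)
    (Z : Matrix (Fin N × Fin n) (Fin N × Fin n) ℂ) :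
    amp N (fun x => a • F x + b • (G x - F x) - K x) Z
      = a • amp N F Z + b • (amp N G Z - amp N F Z) - amp N K Z := by
  ext p q
  simp [amp, smul_eq_mul]

lemma gradFormAmp_comb {n : ℕ} (N : ℕ) (a b : ℂ) (F G K : Mat n → Mat n)
    (X Y : Matrix (Fin N × Fin n) (Fin N × Fin n) ℂ) :
    gradFormAmp N (fun x => a • F x + b • (G x - F x) - K x) X Y
      = a • gradFormAmp N F X Y + b • (gradFormAmp N G X Y - gradFormAmp N F X Y)
        - gradFormAmp N K X Y := by
  unfold gradFormAmp
  rw [amp_comb, amp_comb, amp_comb]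
  simp only [sub_mul, add_mul, smul_mul_assoc, mul_sub, mul_add, mul_smul_comm, smul_sub]
  module

lemma amp_comb2 {n : ℕ} (N : ℕ) (a : ℂ) (F K : Mat n → Mat n)
    (Z : Matrix (Fin N × Fin n) (Fin N × Fin n) ℂ) :
    amp N (fun x => a • F x - K x) Z = a • amp N F Z - amp N K Z := by
  ext p q
  simp [amp, smul_eq_mul]

lemma gradFormAmp_comb2 {n : ℕ} (N : ℕ) (a : ℂ) (F K : Mat n → Mat n)
    (X Y : Matrix (Fin N × Fin n) (Fin N × Fin n) ℂ) :
    gradFormAmp N (fun x => a • F x - K x) X Y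
      = a • gradFormAmp N F X Y - gradFormAmp N K X Y := by
  unfold gradFormAmp
  rw [amp_comb2, amp_comb2, amp_comb2]
  simp only [sub_mul, smul_mul_assoc, mul_sub, mul_smul_comm, smul_sub]
  module

lemma sum_castLE {β : Type*} [AddCommMonoid β] {m m' : ℕ} (hmm : m ≤ m') (g : Fin m' → β)
    (hg : ∀ k : Fin m', ¬ (k : ℕ) < m → g k = 0) :
    ∑ k, g k = ∑ i : Fin m, g (Fin.castLE hmm i) := by
  have h1 : ∑ i : Fin m, g (Fin.castLE hmm i)
      = ∑ k ∈ Finset.univ.map (Fin.castLEEmb hmm), g k := by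
    rw [Finset.sum_map]
    rfl
  rw [h1]
  refine (Finset.sum_subset (Finset.subset_univ _) fun x _ hx => hg x fun hlt => ?_).symm
  exact hx (Finset.mem_map.mpr ⟨⟨(x : ℕ), hlt⟩, Finset.mem_univ _, by
    simp [Fin.castLEEmb]⟩)

lemma oneKron_comb {N n : ℕ} {κ : Type*} [Fintype κ] (a : κ → ℂ) (A : κ → Mat n) :
    oneKron N (∑ k, a k • A k) = ∑ k, a k • oneKron N (A k) := by
  ext p q
  by_cases hc : p.1 = q.1 <;> simp [oneKron, hc, Matrix.sum_apply]

lemma sum_conj_smul {ι κ α : Type*} [Fintype ι] [Fintype κ] [Fintype α] [DecidableEq α]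
    (b : ι → κ → ℂ) (D : κ → Matrix α α ℂ) :
    ∑ i : ι, (∑ k, b i k • D k)ᴴ * (∑ l, b i l • D l)
      = ∑ k, ∑ l, (∑ i, (starRingEnd ℂ) (b i k) * b i l) • ((D k)ᴴ * (D l)) := by
  have h1 : ∀ i : ι, (∑ k, b i k • D k)ᴴ * (∑ l, b i l • D l)
      = ∑ k, ∑ l, ((starRingEnd ℂ) (b i k) * b i l) • ((D k)ᴴ * (D l)) := by
    intro i
    rw [conjTranspose_sum, Finset.sum_mul]
    refine Finset.sum_congr rfl fun k _ => ?_
    rw [conjTranspose_smul, smul_mul_assoc, Finset.mul_sum, Finset.smul_sum]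
    refine Finset.sum_congr rfl fun l _ => ?_
    rw [mul_smul_comm, smul_smul]
    rfl
  rw [Finset.sum_congr rfl fun i _ => h1 i]
  rw [Finset.sum_comm]
  refine Finset.sum_congr rfl fun k _ => ?_
  rw [Finset.sum_comm]
  refine Finset.sum_congr rfl fun l _ => ?_
  rw [← Finset.sum_smul]

lemma gradcp_of_zero {L : Mat 0 → Mat 0} : GradCP L := by
  intro N X
  rw [posSemidef_iff_dotProduct_mulVec]
  constructor
  · ext p q; exact p.2.elim0
  · intro x
    simp [dotProduct]
lemma psd_add {α : Type*} [Fintype α] [DecidableEq α] {A B : Matrix α α ℂ}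
    (hA : A.PosSemidef) (hB : B.PosSemidef) : (A + B).PosSemidef := by
  rw [posSemidef_iff_dotProduct_mulVec]
  constructor
  · show (A + B)ᴴ = _
    rw [conjTranspose_add, hA.1, hB.1]
  · intro x
    rw [add_mulVec, dotProduct_add]
    exact add_nonneg (hA.dotProduct_mulVec_nonneg x) (hB.dotProduct_mulVec_nonneg x)

/-- the redundant part of `L'` does not affect the comparison:
`Γ_L ≤_cp C Γ_{L̂'} + C₁ Γ_{L'−L̂'}` iff `Γ_L ≤_cp C Γ_{L̂'}`. -/
theorem stmt6 (n m m' : ℕ) (hmm : m ≤ m') (H H' : Mat n)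
    (hH : H.IsHermitian) (hH' : H'.IsHermitian)
    (V : Fin m → Mat n) (W : Fin m' → Mat n) (hV : StdJump V) (hW : StdJump W)
    (hspan : Submodule.span ℂ (Set.range V) =
      Submodule.span ℂ (Set.range fun i : Fin m => W (Fin.castLE hmm i)))
    (C C₁ : ℝ) (hC : 0 < C) (hC₁ : 0 ≤ C₁) :
    GradCP (fun x =>
        (C : ℂ) • lindbladOf H' (fun i : Fin m => W (Fin.castLE hmm i)) x
        + (C₁ : ℂ) • (lindbladOf H' W x -
            lindbladOf H' (fun i : Fin m => W (Fin.castLE hmm i)) x)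
        - lindbladOf H V x) ↔
    GradCP (fun x =>
        (C : ℂ) • lindbladOf H' (fun i : Fin m => W (Fin.castLE hmm i)) x
        - lindbladOf H V x) := by
  rcases Nat.eq_zero_or_pos n with hn0 | hn
  · subst hn0
    exact ⟨fun _ => gradcp_of_zero, fun _ => gradcp_of_zero⟩
  -- coefficients of V in terms of the first m of the W's
  have hmem : ∀ i, V i ∈ Submodule.span ℂ
      (Set.range fun k : Fin m => W (Fin.castLE hmm k)) := by
    intro i; rw [← hspan]; exact Submodule.subset_span ⟨i, rfl⟩
  have hexists : ∀ i, ∃ a : Fin m → ℂ, ∑ k, a k • W (Fin.castLE hmm k) = V i := by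
    intro i; exact (Submodule.mem_span_range_iff_exists_fun ℂ).mp (hmem i)
  choose a ha using hexists
  set b : Fin m → Fin m' → ℂ := fun i k =>
    if h : (k : ℕ) < m then a i ⟨(k : ℕ), h⟩ else 0 with hb
  have hbc : ∀ i (k : Fin m), b i (Fin.castLE hmm k) = a i k := by
    intro i k
    simp only [hb, Fin.coe_castLE]
    rw [dif_pos k.isLt]
  -- decomposition of the V-commutators into W-commutators
  have hDV : ∀ (N : ℕ) (X : Matrix (Fin N × Fin n) (Fin N × Fin n) ℂ) (i : Fin m),
      X * oneKron N (V i) - oneKron N (V i) * X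
        = ∑ k : Fin m, a i k • (X * oneKron N (W (Fin.castLE hmm k))
            - oneKron N (W (Fin.castLE hmm k)) * X) := by
    intro N X i
    rw [← ha i, oneKron_comb, Finset.mul_sum, Finset.sum_mul, ← Finset.sum_sub_distrib]
    refine Finset.sum_congr rfl fun k _ => ?_
    rw [Matrix.mul_smul, Matrix.smul_mul, ← smul_sub]
  have hDV' : ∀ (N : ℕ) (X : Matrix (Fin N × Fin n) (Fin N × Fin n) ℂ) (i : Fin m),
      X * oneKron N (V i) - oneKron N (V i) * X
        = ∑ k : Fin m', b i k • (X * oneKron N (W k) - oneKron N (W k) * X) := by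
    intro N X i
    rw [hDV N X i]
    rw [sum_castLE hmm (fun k => b i k • (X * oneKron N (W k) - oneKron N (W k) * X))
      (fun k hk => by rw [hb]; simp [dif_neg hk])]
    exact Finset.sum_congr rfl fun k _ => by rw [hbc]
  -- sum over first m as a restricted sum over all of Fin m'
  have hSF : ∀ (N : ℕ) (X : Matrix (Fin N × Fin n) (Fin N × Fin n) ℂ),
      (∑ k : Fin m', if (k : ℕ) < m then
          (X * oneKron N (W k) - oneKron N (W k) * X)ᴴ *
            (X * oneKron N (W k) - oneKron N (W k) * X) else 0)
        = ∑ i : Fin m,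
            (X * oneKron N (W (Fin.castLE hmm i)) - oneKron N (W (Fin.castLE hmm i)) * X)ᴴ *
              (X * oneKron N (W (Fin.castLE hmm i)) - oneKron N (W (Fin.castLE hmm i)) * X) := by
    intro N X
    rw [sum_castLE hmm _ (fun k hk => if_neg hk)]
    exact Finset.sum_congr rfl fun i _ => if_pos (by simpa using i.isLt)
  -- the coefficient matrix
  set Mmat : Matrix (Fin m') (Fin m') ℂ := Matrix.of fun k l =>
    (if k = l then (if (k : ℕ) < m then (C : ℂ) else (C₁ : ℂ)) else 0)
      - ∑ i, (starRingEnd ℂ) (b i k) * b i l with hMmat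
  have hMherm : Mmat.IsHermitian := by
    show Mmatᴴ = Mmat
    ext k l
    simp only [conjTranspose_apply, hMmat, of_apply, star_sub, star_sum, star_mul',
      RCLike.star_def, Complex.conj_conj]
    congr 1
    · by_cases hkl : k = l
      · subst hkl
        by_cases hk2 : (k : ℕ) < m <;> simp [hk2, Complex.conj_ofReal]
      · rw [if_neg hkl, if_neg (Ne.symm hkl)]
        simp
    · exact Finset.sum_congr rfl fun i _ => by ring
  -- the main identity for Γ_{f₁}
  have hMain1 : ∀ (N : ℕ) (X : Matrix (Fin N × Fin n) (Fin N × Fin n) ℂ),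
      gradFormAmp N (fun x =>
        (C : ℂ) • lindbladOf H' (fun i : Fin m => W (Fin.castLE hmm i)) x
        + (C₁ : ℂ) • (lindbladOf H' W x -
            lindbladOf H' (fun i : Fin m => W (Fin.castLE hmm i)) x)
        - lindbladOf H V x) X X
        = ∑ k, ∑ l, Mmat k l • ((X * oneKron N (W k) - oneKron N (W k) * X)ᴴ *
            (X * oneKron N (W l) - oneKron N (W l) * X)) := by
    intro N X
    rw [gradFormAmp_comb N (C : ℂ) (C₁ : ℂ)
      (lindbladOf H' (fun i : Fin m => W (Fin.castLE hmm i))) (lindbladOf H' W)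
      (lindbladOf H V) X X]
    rw [gradFormAmp_lindblad, gradFormAmp_lindblad, gradFormAmp_lindblad]
    -- rewrite the RHS
    have hsplit : ∑ k, ∑ l, Mmat k l • ((X * oneKron N (W k) - oneKron N (W k) * X)ᴴ *
            (X * oneKron N (W l) - oneKron N (W l) * X))
        = (∑ k : Fin m', (if (k : ℕ) < m then (C : ℂ) else (C₁ : ℂ)) •
            ((X * oneKron N (W k) - oneKron N (W k) * X)ᴴ *
              (X * oneKron N (W k) - oneKron N (W k) * X)))
          - ∑ i : Fin m, (X * oneKron N (V i) - oneKron N (V i) * X)ᴴ *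
              (X * oneKron N (V i) - oneKron N (V i) * X) := by
      have h1 : ∀ k l : Fin m', Mmat k l • ((X * oneKron N (W k) - oneKron N (W k) * X)ᴴ *
            (X * oneKron N (W l) - oneKron N (W l) * X))
          = (if k = l then (if (k : ℕ) < m then (C : ℂ) else (C₁ : ℂ)) else 0) •
              ((X * oneKron N (W k) - oneKron N (W k) * X)ᴴ *
                (X * oneKron N (W l) - oneKron N (W l) * X))
            - (∑ i, (starRingEnd ℂ) (b i k) * b i l) •
              ((X * oneKron N (W k) - oneKron N (W k) * X)ᴴ *
                (X * oneKron N (W l) - oneKron N (W l) * X)) := by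
        intro k l
        rw [hMmat]
        exact sub_smul _ _ _
      simp only [h1, Finset.sum_sub_distrib]
      congr 1
      · refine Finset.sum_congr rfl fun k _ => ?_
        simp only [ite_smul, zero_smul, Finset.sum_ite_eq, Finset.mem_univ, if_true]
      · rw [← sum_conj_smul b (fun k => X * oneKron N (W k) - oneKron N (W k) * X)]
        exact Finset.sum_congr rfl fun i _ => by rw [← hDV' N X i]
    rw [hsplit, ← hSF N X]
    have hc : (C : ℂ) • (∑ k : Fin m', if (k : ℕ) < m then
          (X * oneKron N (W k) - oneKron N (W k) * X)ᴴ *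
            (X * oneKron N (W k) - oneKron N (W k) * X) else 0)
        + (C₁ : ℂ) • ((∑ k : Fin m', (X * oneKron N (W k) - oneKron N (W k) * X)ᴴ *
            (X * oneKron N (W k) - oneKron N (W k) * X))
          - ∑ k : Fin m', if (k : ℕ) < m then
            (X * oneKron N (W k) - oneKron N (W k) * X)ᴴ *
              (X * oneKron N (W k) - oneKron N (W k) * X) else 0)
        = ∑ k : Fin m', (if (k : ℕ) < m then (C : ℂ) else (C₁ : ℂ)) •
            ((X * oneKron N (W k) - oneKron N (W k) * X)ᴴ *
              (X * oneKron N (W k) - oneKron N (W k) * X)) := by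
      rw [smul_sub, Finset.smul_sum, Finset.smul_sum, Finset.smul_sum,
        ← Finset.sum_sub_distrib, ← Finset.sum_add_distrib]
      refine Finset.sum_congr rfl fun k _ => ?_
      by_cases hk : (k : ℕ) < m <;> simp [hk]
    rw [hc]
  -- the main identity for Γ_{f₂}
  have hMain2 : ∀ (N : ℕ) (X : Matrix (Fin N × Fin n) (Fin N × Fin n) ℂ),
      gradFormAmp N (fun x =>
        (C : ℂ) • lindbladOf H' (fun i : Fin m => W (Fin.castLE hmm i)) x
        - lindbladOf H V x) X X
        = ∑ k : Fin m, ∑ l : Fin m,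
            (Mmat.submatrix (Fin.castLE hmm) (Fin.castLE hmm)) k l •
            ((X * oneKron N (W (Fin.castLE hmm k)) - oneKron N (W (Fin.castLE hmm k)) * X)ᴴ *
              (X * oneKron N (W (Fin.castLE hmm l)) - oneKron N (W (Fin.castLE hmm l)) * X)) := by
    intro N X
    rw [gradFormAmp_comb2 N (C : ℂ)
      (lindbladOf H' (fun i : Fin m => W (Fin.castLE hmm i))) (lindbladOf H V) X X]
    rw [gradFormAmp_lindblad, gradFormAmp_lindblad]
    have hent : ∀ k l : Fin m, (Mmat.submatrix (Fin.castLE hmm) (Fin.castLE hmm)) k l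
        = (if k = l then (C : ℂ) else 0) - ∑ i, (starRingEnd ℂ) (a i k) * a i l := by
      intro k l
      simp only [submatrix_apply, hMmat, of_apply, hbc, Fin.castLE_inj, Fin.coe_castLE,
        k.isLt, if_true]
    have h1 : ∀ k l : Fin m,
        (Mmat.submatrix (Fin.castLE hmm) (Fin.castLE hmm)) k l •
          ((X * oneKron N (W (Fin.castLE hmm k)) - oneKron N (W (Fin.castLE hmm k)) * X)ᴴ *
            (X * oneKron N (W (Fin.castLE hmm l)) - oneKron N (W (Fin.castLE hmm l)) * X))
        = (if k = l then (C : ℂ) else 0) •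
            ((X * oneKron N (W (Fin.castLE hmm k)) - oneKron N (W (Fin.castLE hmm k)) * X)ᴴ *
              (X * oneKron N (W (Fin.castLE hmm l)) - oneKron N (W (Fin.castLE hmm l)) * X))
          - (∑ i, (starRingEnd ℂ) (a i k) * a i l) •
            ((X * oneKron N (W (Fin.castLE hmm k)) - oneKron N (W (Fin.castLE hmm k)) * X)ᴴ *
              (X * oneKron N (W (Fin.castLE hmm l)) - oneKron N (W (Fin.castLE hmm l)) * X)) := by
      intro k l
      rw [hent]
      exact sub_smul _ _ _
    simp only [h1, Finset.sum_sub_distrib]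
    congr 1
    · rw [Finset.smul_sum]
      refine Finset.sum_congr rfl fun k _ => ?_
      simp only [ite_smul, zero_smul, Finset.sum_ite_eq, Finset.mem_univ, if_true]
    · rw [← sum_conj_smul a
        (fun k : Fin m => X * oneKron N (W (Fin.castLE hmm k)) - oneKron N (W (Fin.castLE hmm k)) * X)]
      exact Finset.sum_congr rfl fun i _ => by rw [← hDV N X i]
  constructor
  · -- forward direction
    intro hcp
    have hMpsd : Mmat.PosSemidef :=
      key_psd hn W hW.1 hW.2 Mmat hMherm (fun N X => hMain1 N X ▸ hcp N X)
    have hM' : (Mmat.submatrix (Fin.castLE hmm) (Fin.castLE hmm)).PosSemidef :=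
      hMpsd.submatrix _
    obtain ⟨Bm, hBm⟩ : ∃ Bm : Matrix (Fin m) (Fin m) ℂ,
        Mmat.submatrix (Fin.castLE hmm) (Fin.castLE hmm) = Bmᴴ * Bm := by
      open scoped MatrixOrder in
      exact CStarAlgebra.nonneg_iff_eq_star_mul_self.mp hM'.nonneg
    intro N X
    rw [hMain2 N X, hBm]
    have hent2 : ∀ k l : Fin m, (Bmᴴ * Bm) k l = ∑ r, (starRingEnd ℂ) (Bm r k) * Bm r l := by
      intro k l
      simp [mul_apply, conjTranspose_apply, RCLike.star_def]
    rw [Finset.sum_congr rfl fun k _ => Finset.sum_congr rfl fun l _ => by rw [hent2]]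
    rw [← sum_conj_smul Bm
      (fun k : Fin m => X * oneKron N (W (Fin.castLE hmm k)) - oneKron N (W (Fin.castLE hmm k)) * X)]
    exact psd_sum _ _ fun r _ => posSemidef_conjTranspose_mul_self _
  · -- backward direction
    intro hcp N X
    rw [hMain1 N X]
    have hsplit2 : (∑ k, ∑ l, Mmat k l • ((X * oneKron N (W k) - oneKron N (W k) * X)ᴴ *
            (X * oneKron N (W l) - oneKron N (W l) * X)))
        = gradFormAmp N (fun x =>
            (C : ℂ) • lindbladOf H' (fun i : Fin m => W (Fin.castLE hmm i)) x
            - lindbladOf H V x) X X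
          + (C₁ : ℂ) • ∑ k : Fin m', (if (k : ℕ) < m then 0 else
              (X * oneKron N (W k) - oneKron N (W k) * X)ᴴ *
                (X * oneKron N (W k) - oneKron N (W k) * X)) := by
      rw [← hMain1 N X, gradFormAmp_comb N (C : ℂ) (C₁ : ℂ)
        (lindbladOf H' (fun i : Fin m => W (Fin.castLE hmm i))) (lindbladOf H' W)
        (lindbladOf H V) X X,
        gradFormAmp_comb2 N (C : ℂ)
        (lindbladOf H' (fun i : Fin m => W (Fin.castLE hmm i))) (lindbladOf H V) X X]
      have hdiff : gradFormAmp N (lindbladOf H' W) X X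
          - gradFormAmp N (lindbladOf H' (fun i : Fin m => W (Fin.castLE hmm i))) X X
          = ∑ k : Fin m', (if (k : ℕ) < m then 0 else
              (X * oneKron N (W k) - oneKron N (W k) * X)ᴴ *
                (X * oneKron N (W k) - oneKron N (W k) * X)) := by
        rw [gradFormAmp_lindblad, gradFormAmp_lindblad, ← hSF N X, ← Finset.sum_sub_distrib]
        refine Finset.sum_congr rfl fun k _ => ?_
        by_cases hk : (k : ℕ) < m <;> simp [hk]
      rw [hdiff]
      abel
    rw [hsplit2]
    refine psd_add (hcp N X) (psd_smul_real C₁ hC₁ (psd_sum _ _ fun k _ => ?_))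
    by_cases hk : (k : ℕ) < m
    · simp only [if_pos hk]
      exact Matrix.PosSemidef.zero
    · simp only [if_neg hk]
      exact posSemidef_conjTranspose_mul_self _
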